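/- arXiv:0710.2641 — 2 statements merged into one kernel-verified Lean document; each statement's English description precedes it below -/
import Mathlib

section
/- Let B_O be the coordinate ring of the O-border basis scheme and U_O = B_O[x_1,…,x_n]/(g_1,…,g_ν) the universal border basis family, where g_j = b_j − Σ_i c_{ij} t_i is the generic O-border prebasis. Then the residue classes of t_1,…,t_μ form a free B_O-module basis of U_O; in particular, U_O is a flat B_O-algebra. -/
open MvPolynomial Finsupp

open scoped Classical

set_option synthInstance.maxHeartbeats 1000000
set_option maxHeartbeats 1000000

/-- The border of a finite set of monomials (represented as exponent vectors). -/
noncomputable def borderSet (n : ℕ) (O : Finset (Fin n →₀ ℕ)) : Finset (Fin n →₀ ℕ) :=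
  (O.biUnion (fun t => Finset.image (fun k => t + Finsupp.single k 1) Finset.univ)) \ O

/-- The polynomial ring `K[c_{ij}]` in the generic coefficients, indexed by pairs `(t, b)` of an
order ideal term `t` and a border term `b`. -/
abbrev CoeffRing (K : Type*) [Field K] (n : ℕ) : Type _ :=
  MvPolynomial ((Fin n →₀ ℕ) × (Fin n →₀ ℕ)) K

/-- The `k`-th generic multiplication matrix of the generic `O`-border prebasis
`g_b = b - Σ_{t ∈ O} c_{t,b} t`. -/
noncomputable def Agen (K : Type*) [Field K] (n : ℕ) (O : Finset (Fin n →₀ ℕ)) (k : Fin n) :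
    Matrix ↥O ↥O (CoeffRing K n) :=
  Matrix.of fun r i =>
    if ((i : Fin n →₀ ℕ) + Finsupp.single k 1) ∈ O then
      (if (r : Fin n →₀ ℕ) = (i : Fin n →₀ ℕ) + Finsupp.single k 1 then 1 else 0)
    else if ((i : Fin n →₀ ℕ) + Finsupp.single k 1) ∈ borderSet n O then
      X ((r : Fin n →₀ ℕ), (i : Fin n →₀ ℕ) + Finsupp.single k 1)
    else 0

/-- The vanishing ideal `I(𝔹_O)` of the `O`-border basis scheme: the ideal generated by the
entries of the commutators of the generic multiplication matrices. -/
noncomputable def bbsIdeal (K : Type*) [Field K] (n : ℕ) (O : Finset (Fin n →₀ ℕ)) :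
    Ideal (CoeffRing K n) :=
  Ideal.span {x | ∃ (k l : Fin n) (r i : ↥O),
    x = (Agen K n O k * Agen K n O l - Agen K n O l * Agen K n O k) r i}

/-- The coordinate ring `B_O = K[c_{ij}]/I(𝔹_O)` of the `O`-border basis scheme. -/
abbrev BOring (K : Type*) [Field K] (n : ℕ) (O : Finset (Fin n →₀ ℕ)) : Type _ :=
  CoeffRing K n ⧸ bbsIdeal K n O

/-- The ideal of `B_O[x_1,…,x_n]` generated by the generic `O`-border prebasis, defining the
universal `O`-border basis family `U_O = B_O[x_1,…,x_n]/(g_1,…,g_ν)`. -/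
noncomputable def univIdeal (K : Type*) [Field K] (n : ℕ) (O : Finset (Fin n →₀ ℕ)) :
    Ideal (MvPolynomial (Fin n) (BOring K n O)) :=
  Ideal.span {p | ∃ b ∈ borderSet n O, p = monomial b 1 -
    ∑ t ∈ O, MvPolynomial.C (Ideal.Quotient.mk (bbsIdeal K n O) (X (t, b))) * monomial t 1}

/-!
Spanning: for `t ∈ O`, `x_k t` is either in `O` or a border term `b`, and modulo the prebasis
`b ≡ Σ c_{t,b} t`; so the `B_O`-span of the residue classes of `O` is stable under every `x_k`,
contains `1`, and is therefore everything.

Independence: over `B_O` the generic multiplication matrices `A_k` commute, so `p ↦ p(A) e₁` is a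
well-defined linear map `B_O[x] → B_O^O`. Since `O` is an order ideal it sends `t ∈ O` to `e_t`,
and it kills every `g_b` (and with it the ideal they generate, as `(q g)(A) e₁ = q(A) g(A) e₁`).
It thus factors through `U_O` and maps the residue classes of `O` to the standard basis.
-/

theorem Finsupp.induction_add_single {σ : Type*} {motive : (σ →₀ ℕ) → Prop} (zero : motive 0)
    (add_single : ∀ t k, motive t → motive (t + single k 1)) (t : σ →₀ ℕ) : motive t := by
  induction t using Finsupp.induction with
  | zero => exact zero
  | single_add k m t _ hm ht =>
    clear hm
    induction m with
    | zero => simpa using ht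
    | succ m ih =>
      rw [single_add, add_right_comm]
      exact add_single _ k ih

open scoped IsMulCommutative in
noncomputable def MvPolynomial.aevalOfCommute {σ R A : Type*} [CommRing R] [Ring A] [Algebra R A]
    (a : σ → A) (ha : ∀ i j, Commute (a i) (a j)) : MvPolynomial σ R →ₐ[R] A :=
  have := Algebra.isMulCommutative_adjoin R (s := Set.range a)
    (by rintro _ ⟨i, rfl⟩ _ ⟨j, rfl⟩; exact ha i j)
  (Algebra.adjoin R (Set.range a)).val.comp
    (aeval fun i => ⟨a i, Algebra.subset_adjoin ⟨i, rfl⟩⟩)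

@[simp]
theorem MvPolynomial.aevalOfCommute_X {σ R A : Type*} [CommRing R] [Ring A] [Algebra R A]
    (a : σ → A) (ha : ∀ i j, Commute (a i) (a j)) (i : σ) :
    aevalOfCommute (R := R) a ha (X i) = a i := by
  simp [aevalOfCommute]

section BorderPrebasis

open scoped Matrix

variable {R : Type*} [CommRing R] {n : ℕ} {O : Finset (Fin n →₀ ℕ)}

theorem exists_eq_add_single_of_mem_borderSet {b : Fin n →₀ ℕ} (hb : b ∈ borderSet n O) :
    ∃ t ∈ O, ∃ k, b = t + single k 1 := by
  obtain ⟨⟨t, ht, k, rfl⟩, -⟩ := by simpa [borderSet] using hb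
  exact ⟨t, ht, k, rfl⟩

theorem add_single_mem_borderSet {t : Fin n →₀ ℕ} (ht : t ∈ O) (k : Fin n)
    (hk : t + single k 1 ∉ O) : t + single k 1 ∈ borderSet n O := by
  simp only [borderSet, Finset.mem_sdiff, Finset.mem_biUnion, Finset.mem_image, Finset.mem_univ,
    true_and]
  exact ⟨⟨t, ht, k, rfl⟩, hk⟩

variable (O) (c : (Fin n →₀ ℕ) × (Fin n →₀ ℕ) → R)

noncomputable def borderPrebasisPoly (b : Fin n →₀ ℕ) : MvPolynomial (Fin n) R :=
  monomial b 1 - ∑ t ∈ O, C (c (t, b)) * monomial t 1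

noncomputable def borderPrebasisIdeal : Ideal (MvPolynomial (Fin n) R) :=
  Ideal.span {p | ∃ b ∈ borderSet n O, p = borderPrebasisPoly O c b}

/-- Column `i` holds the coordinates of `x_k t_i` after rewriting border terms by the prebasis. -/
noncomputable def multMatrix (k : Fin n) : Matrix O O R :=
  Matrix.of fun r i =>
    if (i : Fin n →₀ ℕ) + single k 1 ∈ O then
      (if (r : Fin n →₀ ℕ) = (i : Fin n →₀ ℕ) + single k 1 then 1 else 0)
    else if (i : Fin n →₀ ℕ) + single k 1 ∈ borderSet n O then
      c ((r : Fin n →₀ ℕ), (i : Fin n →₀ ℕ) + single k 1)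
    else 0

theorem multMatrix_mulVec_single_of_mem {k : Fin n} {i j : O}
    (hj : (j : Fin n →₀ ℕ) = (i : Fin n →₀ ℕ) + single k 1) :
    multMatrix O c k *ᵥ Pi.single i 1 = Pi.single j 1 := by
  obtain ⟨j, hjO⟩ := j
  subst hj
  ext r
  simp [multMatrix, hjO, Pi.single_apply, Subtype.ext_iff]

theorem multMatrix_mulVec_single_of_mem_borderSet {k : Fin n} {i : O}
    (hb : (i : Fin n →₀ ℕ) + single k 1 ∈ borderSet n O) :
    multMatrix O c k *ᵥ Pi.single i 1 =
      fun r : O => c ((r : Fin n →₀ ℕ), (i : Fin n →₀ ℕ) + single k 1) := by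
  ext r
  simp [multMatrix, hb, (Finset.mem_sdiff.mp hb).2]

theorem sum_C_mul_monomial_eq_sum_smul (b : Fin n →₀ ℕ) :
    ∑ t ∈ O, C (c (t, b)) * monomial t (1 : R) =
      ∑ t : O, c (t, b) • monomial (t : Fin n →₀ ℕ) 1 := by
  simp only [C_mul']
  exact (Finset.sum_coe_sort O fun t => c (t, b) • monomial t 1).symm

local notation "τ" =>
  fun t : O => Ideal.Quotient.mk (borderPrebasisIdeal O c) (monomial (t : Fin n →₀ ℕ) (1 : R))

theorem mk_monomial_eq_sum_of_mem_borderSet {b : Fin n →₀ ℕ} (hb : b ∈ borderSet n O) :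
    Ideal.Quotient.mk (borderPrebasisIdeal O c) (monomial b 1) = ∑ t : O, c (t, b) • τ t := by
  have hg : Ideal.Quotient.mk (borderPrebasisIdeal O c) (monomial b 1) =
      Ideal.Quotient.mk _ (∑ t ∈ O, C (c (t, b)) * monomial t 1) :=
    Ideal.Quotient.eq.mpr (Ideal.subset_span ⟨b, hb, rfl⟩)
  rw [hg, sum_C_mul_monomial_eq_sum_smul, map_sum]
  simp_rw [← Ideal.Quotient.mkₐ_eq_mk R, map_smul]

theorem mk_X_mul_mem_span {k : Fin n} {w : MvPolynomial (Fin n) R ⧸ borderPrebasisIdeal O c}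
    (hw : w ∈ Submodule.span R (Set.range τ)) :
    Ideal.Quotient.mk _ (X k) * w ∈ Submodule.span R (Set.range τ) := by
  induction hw using Submodule.span_induction with
  | mem w hw =>
    obtain ⟨t, rfl⟩ := hw
    rw [← map_mul, mul_comm, ← pow_one (X k), ← monomial_add_single]
    by_cases hk : (t : Fin n →₀ ℕ) + single k 1 ∈ O
    · exact Submodule.subset_span ⟨⟨_, hk⟩, rfl⟩
    · rw [mk_monomial_eq_sum_of_mem_borderSet O c (add_single_mem_borderSet t.2 k hk)]
      exact Submodule.sum_mem _ fun t' _ =>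
        Submodule.smul_mem _ _ (Submodule.subset_span ⟨t', rfl⟩)
  | zero => simp
  | add w w' _ _ hw hw' => rw [mul_add]; exact add_mem hw hw'
  | smul a w _ hw => rw [mul_smul_comm]; exact Submodule.smul_mem _ a hw

theorem span_mk_monomial_eq_top (h0 : 0 ∈ O) : Submodule.span R (Set.range τ) = ⊤ := by
  rw [eq_top_iff]
  rintro w -
  obtain ⟨p, rfl⟩ := Ideal.Quotient.mk_surjective w
  induction p using MvPolynomial.induction_on with
  | C a =>
    have hC : (C a : MvPolynomial (Fin n) R) = a • monomial 0 1 := by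
      rw [smul_monomial, smul_eq_mul, mul_one, monomial_zero']
    rw [hC, ← Ideal.Quotient.mkₐ_eq_mk R, map_smul]
    exact Submodule.smul_mem _ a (Submodule.subset_span ⟨⟨0, h0⟩, rfl⟩)
  | add p q hp hq => rw [map_add]; exact add_mem hp hq
  | mul_X p k hp => rw [map_mul, mul_comm]; exact mk_X_mul_mem_span O c hp

/-- `p ↦ p(A) e₁`, where `A = (multMatrix O c k)_k` and `e₁` is the basis vector of the term `1`. -/
noncomputable def multEval (hcomm : ∀ k l, Commute (multMatrix O c k) (multMatrix O c l))
    (h0 : 0 ∈ O) : MvPolynomial (Fin n) R →ₗ[R] O → R :=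
  LinearMap.applyₗ (Pi.single ⟨0, h0⟩ 1) ∘ₗ Matrix.toLin'.toLinearMap ∘ₗ
    (aevalOfCommute (multMatrix O c) hcomm).toLinearMap

section Eval

variable {O c} (hcomm : ∀ k l, Commute (multMatrix O c k) (multMatrix O c l)) (h0 : 0 ∈ O)

theorem multEval_mul (p q : MvPolynomial (Fin n) R) :
    multEval O c hcomm h0 (p * q) = aevalOfCommute (multMatrix O c) hcomm p *ᵥ
      multEval O c hcomm h0 q := by
  simp [multEval]

theorem multEval_monomial (hO : IsLowerSet (O : Set (Fin n →₀ ℕ))) (t : O) :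
    multEval O c hcomm h0 (monomial (t : Fin n →₀ ℕ) 1) = Pi.single t 1 := by
  suffices ∀ t (ht : t ∈ O), multEval O c hcomm h0 (monomial t 1) = Pi.single ⟨t, ht⟩ 1 from
    this t t.2
  intro t
  induction t using Finsupp.induction_add_single with
  | zero => intro; simp [multEval]
  | add_single t k ih =>
    intro ht
    rw [monomial_add_single, pow_one, mul_comm, multEval_mul, aevalOfCommute_X,
      ih (hO le_self_add ht)]
    exact multMatrix_mulVec_single_of_mem O c rfl

theorem multEval_borderPrebasisPoly (hO : IsLowerSet (O : Set (Fin n →₀ ℕ)))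
    {b : Fin n →₀ ℕ} (hb : b ∈ borderSet n O) :
    multEval O c hcomm h0 (borderPrebasisPoly O c b) = 0 := by
  obtain ⟨t, ht, k, rfl⟩ := exists_eq_add_single_of_mem_borderSet hb
  rw [borderPrebasisPoly, map_sub, sub_eq_zero, sum_C_mul_monomial_eq_sum_smul, map_sum,
    monomial_add_single, pow_one, mul_comm, multEval_mul, aevalOfCommute_X,
    multEval_monomial hcomm h0 hO ⟨t, ht⟩,
    multMatrix_mulVec_single_of_mem_borderSet O c (i := ⟨t, ht⟩) hb]
  simp_rw [map_smul, multEval_monomial hcomm h0 hO]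
  ext r
  simp [Pi.single_apply]

theorem borderPrebasisIdeal_le_ker_multEval (hO : IsLowerSet (O : Set (Fin n →₀ ℕ))) :
    (borderPrebasisIdeal O c).restrictScalars R ≤ LinearMap.ker (multEval O c hcomm h0) := by
  intro p hp
  induction hp using Submodule.span_induction with
  | mem p hp =>
    obtain ⟨b, hb, rfl⟩ := hp
    exact multEval_borderPrebasisPoly hcomm h0 hO hb
  | zero => exact zero_mem _
  | add p q _ _ hp hq => exact add_mem hp hq
  | smul a p _ hp =>
    rw [LinearMap.mem_ker, smul_eq_mul, multEval_mul, LinearMap.mem_ker.mp hp, Matrix.mulVec_zero]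

end Eval

variable {O c} in
theorem linearIndependent_mk_monomial
    (hcomm : ∀ k l, Commute (multMatrix O c k) (multMatrix O c l)) (h0 : 0 ∈ O)
    (hO : IsLowerSet (O : Set (Fin n →₀ ℕ))) :
    LinearIndependent R τ := by
  let ψ := ((borderPrebasisIdeal O c).restrictScalars R).liftQ (multEval O c hcomm h0)
      (borderPrebasisIdeal_le_ker_multEval hcomm h0 hO) ∘ₗ
    (Submodule.Quotient.restrictScalarsEquiv R _).symm.toLinearMap
  have hψ : ψ ∘ τ = Pi.basisFun R O := by
    ext1 t
    simp [ψ, ← Ideal.Quotient.mk_eq_mk, multEval_monomial hcomm h0 hO]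
  exact .of_comp ψ (hψ ▸ (Pi.basisFun R O).linearIndependent)

end BorderPrebasis

section Universal

variable (K : Type*) [Field K] (n : ℕ) (O : Finset (Fin n →₀ ℕ))

theorem multMatrix_mk_X_eq_mapMatrix_Agen (k : Fin n) :
    multMatrix O (fun p => Ideal.Quotient.mk (bbsIdeal K n O) (X p)) k =
      (Ideal.Quotient.mk (bbsIdeal K n O)).mapMatrix (Agen K n O k) := by
  ext r i
  simp only [multMatrix, Agen, RingHom.mapMatrix_apply, Matrix.map_apply, Matrix.of_apply]
  split_ifs <;> simp

theorem commute_multMatrix_mk_X (k l : Fin n) :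
    Commute (multMatrix O (fun p => Ideal.Quotient.mk (bbsIdeal K n O) (X p)) k)
      (multMatrix O (fun p => Ideal.Quotient.mk (bbsIdeal K n O) (X p)) l) := by
  rw [multMatrix_mk_X_eq_mapMatrix_Agen, multMatrix_mk_X_eq_mapMatrix_Agen, commute_iff_eq,
    ← map_mul, ← map_mul, ← sub_eq_zero, ← map_sub]
  ext r i
  exact Ideal.Quotient.eq_zero_iff_mem.mpr (Ideal.subset_span ⟨k, l, r, i, rfl⟩)

end Universal

/-- **The universal border basis family.** The residue classes of the order ideal terms form a
free `B_O`-module basis of `U_O`; in particular `U_O` is flat over `B_O`. -/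
theorem universal_borderBasis_family_free (K : Type*) [Field K] (n : ℕ)
    (O : Finset (Fin n →₀ ℕ)) (h0 : (0 : Fin n →₀ ℕ) ∈ O)
    (hO : ∀ t ∈ O, ∀ s : Fin n →₀ ℕ, s ≤ t → s ∈ O) :
    LinearIndependent (BOring K n O)
      (fun t : ↥O => Ideal.Quotient.mk (univIdeal K n O)
        (monomial (t : Fin n →₀ ℕ) (1 : BOring K n O))) ∧
    Submodule.span (BOring K n O)
      (Set.range (fun t : ↥O => Ideal.Quotient.mk (univIdeal K n O)
        (monomial (t : Fin n →₀ ℕ) (1 : BOring K n O)))) = ⊤ ∧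
    Module.Flat (BOring K n O)
      (@HasQuotient.Quotient (MvPolynomial (Fin n) (BOring K n O)) _
        (@Ideal.instHasQuotient _ inferInstance) (univIdeal K n O)) := by
  have hli := linearIndependent_mk_monomial (commute_multMatrix_mk_X K n O) h0
    fun _ _ hst ht => hO _ ht _ hst
  have hspan := span_mk_monomial_eq_top O (fun p => Ideal.Quotient.mk (bbsIdeal K n O) (X p)) h0
  have hfree := Module.Free.of_basis (Module.Basis.mk hli hspan.ge)
  exact ⟨hli, hspan, @Module.Flat.of_free _ _ _ _ _ hfree⟩
end

section
/- Let b_i, b_j, b_m ∈ ∂O be such that b_i = x_ℓ b_m and b_j = x_k b_m (across-the-corner neighbors with x_k b_i = x_ℓ b_j). Then the entries of the vector A_k c_i − A_ℓ c_j lie in the ideal I(B_O) generated by the entries of the commutators of the generic multiplication matrices, where c_j = (c_{1j},…,c_{μj})^tr. Specifically, A_k c_i − A_ℓ c_j = A_k(c_i − A_ℓ c_m) + (A_k A_ℓ − A_ℓ A_k)c_m − A_ℓ(c_j − A_k c_m), and the entries of c_i − A_ℓ c_m and c_j − A_k c_m lie in I(B_O). -/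
open MvPolynomial Finsupp

open scoped Classical

set_option synthInstance.maxHeartbeats 1000000
set_option maxHeartbeats 1000000

/-- The column vector `c_j = (c_{1j},…,c_{μj})` of generic coefficients of a border term. -/
noncomputable def cvec (K : Type*) [Field K] (n : ℕ) (O : Finset (Fin n →₀ ℕ))
    (b : Fin n →₀ ℕ) : ↥O → CoeffRing K n :=
  fun t => X ((t : Fin n →₀ ℕ), b)

/-! The column of `A_s` at `t ∈ O` is `e_{x_s t}` if `x_s t ∈ O` and `c_{x_s t}` otherwise.
A border term `b_i = x_ℓ b_m` is `x_s t` for some `t ∈ O`, and `s ≠ ℓ` because `b_m ∉ O`; so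
`t = x_ℓ t₀` with `t₀ ∈ O` and `b_m = x_s t₀`. Hence `c_i = A_s A_ℓ e_{t₀}` while
`A_ℓ c_m = A_ℓ A_s e_{t₀}`: the vector `c_i − A_ℓ c_m` is a column of `A_s A_ℓ − A_ℓ A_s`. -/

open scoped Matrix

theorem Matrix.mulVec_apply_mem_of_forall_mem {R m n : Type*} [CommSemiring R] [Fintype n]
    {I : Ideal R} (M : Matrix m n R) {v : n → R} (hv : ∀ j, v j ∈ I) (i : m) :
    (M *ᵥ v) i ∈ I :=
  Ideal.sum_mem I fun j _ => I.mul_mem_left _ (hv j)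

theorem Matrix.mulVec_apply_mem_of_row_mem {R m n : Type*} [CommSemiring R] [Fintype n]
    {I : Ideal R} {M : Matrix m n R} {i : m} (hM : ∀ j, M i j ∈ I) (v : n → R) :
    (M *ᵥ v) i ∈ I :=
  Ideal.sum_mem I fun j _ => I.mul_mem_right _ (hM j)

theorem Matrix.mulVec_sub_mulVec_eq_add_commutator {R n : Type*} [Ring R] [Fintype n]
    (A B : Matrix n n R) (x y z : n → R) :
    A *ᵥ x - B *ᵥ z = A *ᵥ (x - B *ᵥ y) + (A * B - B * A) *ᵥ y - B *ᵥ (z - A *ᵥ y) := by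
  simp only [Matrix.mulVec_sub, Matrix.sub_mulVec, Matrix.mulVec_mulVec]
  abel

section BorderBasis

variable {K : Type*} [Field K] {n : ℕ} {O : Finset (Fin n →₀ ℕ)}

theorem mem_borderSet {b : Fin n →₀ ℕ} :
    b ∈ borderSet n O ↔ (∃ t ∈ O, ∃ k : Fin n, b = t + single k 1) ∧ b ∉ O := by
  simp only [borderSet, Finset.mem_sdiff, Finset.mem_biUnion, Finset.mem_image,
    Finset.mem_univ, true_and, eq_comm (a := b)]

theorem Agen_col_of_add_mem (s : Fin n) (t : O) (h : (t : Fin n →₀ ℕ) + single s 1 ∈ O) :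
    (Agen K n O s).col t = Pi.single ⟨_, h⟩ 1 := by
  funext r
  simp [Agen, h, Pi.single_apply, Subtype.ext_iff]

theorem Agen_col_of_add_notMem (s : Fin n) (t : O) (h : (t : Fin n →₀ ℕ) + single s 1 ∉ O) :
    (Agen K n O s).col t = cvec K n O ((t : Fin n →₀ ℕ) + single s 1) := by
  have hb : (t : Fin n →₀ ℕ) + single s 1 ∈ borderSet n O :=
    mem_borderSet.2 ⟨⟨t, t.2, s, rfl⟩, h⟩
  funext r
  simp [Agen, cvec, h, hb]

theorem exists_corner_of_border_eq_add_single
    (hO : ∀ t ∈ O, ∀ s : Fin n →₀ ℕ, s ≤ t → s ∈ O) {b b' : Fin n →₀ ℕ}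
    (hb : b ∈ borderSet n O) (hb' : b' ∉ O) {l : Fin n} (hbl : b = b' + single l 1) :
    ∃ (t₀ : O) (k : Fin n), (t₀ : Fin n →₀ ℕ) + single l 1 ∈ O ∧
      b' = (t₀ : Fin n →₀ ℕ) + single k 1 ∧
      b = ((t₀ : Fin n →₀ ℕ) + single l 1) + single k 1 := by
  obtain ⟨⟨t, ht, k, hbk⟩, -⟩ := mem_borderSet.1 hb
  have hkl : k ≠ l := by
    rintro rfl
    exact hb' (add_right_cancel (hbl.symm.trans hbk) ▸ ht)
  have hlt : single l 1 ≤ t := by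
    have hb_l := congr($hbk l)
    rw [hbl] at hb_l
    simp only [Finsupp.coe_add, Pi.add_apply, single_eq_same, single_eq_of_ne' hkl,
      add_zero] at hb_l
    exact single_le_iff.2 (by omega)
  refine ⟨⟨t - single l 1, hO t ht _ tsub_le_self⟩, k, ?_, ?_, ?_⟩
  · simpa [tsub_add_cancel_of_le hlt] using ht
  · apply add_right_cancel (b := single l 1)
    rw [← hbl, hbk, add_right_comm, tsub_add_cancel_of_le hlt]
  · simpa [tsub_add_cancel_of_le hlt] using hbk

theorem cvec_sub_Agen_mulVec_cvec_mem_bbsIdeal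
    (hO : ∀ t ∈ O, ∀ s : Fin n →₀ ℕ, s ≤ t → s ∈ O) {b b' : Fin n →₀ ℕ}
    (hb : b ∈ borderSet n O) (hb' : b' ∈ borderSet n O) {l : Fin n}
    (hbl : b = b' + single l 1) (t : O) :
    cvec K n O b t - (Agen K n O l *ᵥ cvec K n O b') t ∈ bbsIdeal K n O := by
  obtain ⟨t₀, k, ht₀l, hb'k, hbk⟩ :=
    exists_corner_of_border_eq_add_single hO hb (mem_borderSet.1 hb').2 hbl
  have hcb : cvec K n O b = (Agen K n O k * Agen K n O l).col t₀ := by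
    rw [← Matrix.mulVec_single_one, ← Matrix.mulVec_mulVec, Matrix.mulVec_single_one,
      Agen_col_of_add_mem l t₀ ht₀l, Matrix.mulVec_single_one,
      Agen_col_of_add_notMem k _ (hbk ▸ (mem_borderSet.1 hb).2), hbk]
  have hcb' : Agen K n O l *ᵥ cvec K n O b' = (Agen K n O l * Agen K n O k).col t₀ := by
    rw [← Matrix.mulVec_single_one, ← Matrix.mulVec_mulVec, Matrix.mulVec_single_one,
      Agen_col_of_add_notMem k t₀ (hb'k ▸ (mem_borderSet.1 hb').2), hb'k]
  rw [hcb, hcb']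
  exact Ideal.subset_span ⟨k, l, t, t₀, rfl⟩

theorem commutator_mulVec_apply_mem_bbsIdeal (k l : Fin n) (v : O → CoeffRing K n) (t : O) :
    ((Agen K n O k * Agen K n O l - Agen K n O l * Agen K n O k) *ᵥ v) t ∈ bbsIdeal K n O :=
  Matrix.mulVec_apply_mem_of_row_mem (I := bbsIdeal K n O)
    (fun r => Ideal.subset_span ⟨k, l, t, r, rfl⟩) v

end BorderBasis

theorem acrossTheCorner_entries_mem_general (K : Type*) [Field K] (n : ℕ)
    (O : Finset (Fin n →₀ ℕ))
    (hO : ∀ t ∈ O, ∀ s : Fin n →₀ ℕ, s ≤ t → s ∈ O)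
    (bi bj bm : Fin n →₀ ℕ) (hbi : bi ∈ borderSet n O) (hbj : bj ∈ borderSet n O)
    (hbm : bm ∈ borderSet n O) (k l : Fin n)
    (hil : bi = bm + Finsupp.single l 1) (hjk : bj = bm + Finsupp.single k 1) :
    (∀ t : ↥O,
      cvec K n O bi t - (Agen K n O l).mulVec (cvec K n O bm) t ∈ bbsIdeal K n O) ∧
    (∀ t : ↥O,
      cvec K n O bj t - (Agen K n O k).mulVec (cvec K n O bm) t ∈ bbsIdeal K n O) ∧
    ((Agen K n O k).mulVec (cvec K n O bi) - (Agen K n O l).mulVec (cvec K n O bj) =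
      (Agen K n O k).mulVec (cvec K n O bi - (Agen K n O l).mulVec (cvec K n O bm)) +
        (Agen K n O k * Agen K n O l - Agen K n O l * Agen K n O k).mulVec (cvec K n O bm) -
        (Agen K n O l).mulVec (cvec K n O bj - (Agen K n O k).mulVec (cvec K n O bm))) ∧
    (∀ t : ↥O,
      (Agen K n O k).mulVec (cvec K n O bi) t - (Agen K n O l).mulVec (cvec K n O bj) t ∈
        bbsIdeal K n O) := by
  have hi := cvec_sub_Agen_mulVec_cvec_mem_bbsIdeal (K := K) hO hbi hbm hil
  have hj := cvec_sub_Agen_mulVec_cvec_mem_bbsIdeal (K := K) hO hbj hbm hjk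
  have hdecomp := Matrix.mulVec_sub_mulVec_eq_add_commutator (Agen K n O k) (Agen K n O l)
    (cvec K n O bi) (cvec K n O bm) (cvec K n O bj)
  refine ⟨hi, hj, hdecomp, fun t => ?_⟩
  rw [← Pi.sub_apply, hdecomp]
  exact sub_mem
    (add_mem (Matrix.mulVec_apply_mem_of_forall_mem _ hi t)
      (commutator_mulVec_apply_mem_bbsIdeal k l _ t))
    (Matrix.mulVec_apply_mem_of_forall_mem _ hj t)

/-- For across-the-corner neighbors `b_i = x_ℓ b_m`, `b_j = x_k b_m`, the entries of
`A_k c_i − A_ℓ c_j` lie in `I(𝔹_O)`; indeed the entries of `c_i − A_ℓ c_m` and of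
`c_j − A_k c_m` lie in `I(𝔹_O)` and
`A_k c_i − A_ℓ c_j = A_k(c_i − A_ℓ c_m) + (A_k A_ℓ − A_ℓ A_k)c_m − A_ℓ(c_j − A_k c_m)`. -/
theorem acrossTheCorner_entries_mem (K : Type*) [Field K] (n : ℕ)
    (O : Finset (Fin n →₀ ℕ)) (h0 : (0 : Fin n →₀ ℕ) ∈ O)
    (hO : ∀ t ∈ O, ∀ s : Fin n →₀ ℕ, s ≤ t → s ∈ O)
    (bi bj bm : Fin n →₀ ℕ) (hbi : bi ∈ borderSet n O) (hbj : bj ∈ borderSet n O)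
    (hbm : bm ∈ borderSet n O) (k l : Fin n)
    (hil : bi = bm + Finsupp.single l 1) (hjk : bj = bm + Finsupp.single k 1) :
    (∀ t : ↥O,
      cvec K n O bi t - (Agen K n O l).mulVec (cvec K n O bm) t ∈ bbsIdeal K n O) ∧
    (∀ t : ↥O,
      cvec K n O bj t - (Agen K n O k).mulVec (cvec K n O bm) t ∈ bbsIdeal K n O) ∧
    ((Agen K n O k).mulVec (cvec K n O bi) - (Agen K n O l).mulVec (cvec K n O bj) =
      (Agen K n O k).mulVec (cvec K n O bi - (Agen K n O l).mulVec (cvec K n O bm)) +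
        (Agen K n O k * Agen K n O l - Agen K n O l * Agen K n O k).mulVec (cvec K n O bm) -
        (Agen K n O l).mulVec (cvec K n O bj - (Agen K n O k).mulVec (cvec K n O bm))) ∧
    (∀ t : ↥O,
      (Agen K n O k).mulVec (cvec K n O bi) t - (Agen K n O l).mulVec (cvec K n O bj) t ∈
        bbsIdeal K n O) :=
  acrossTheCorner_entries_mem_general K n O hO bi bj bm hbi hbj hbm k l hil hjk
end
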